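/- Let n ≥ 1 and let R be a commutative ring with identity having at least n+1 distinct maximal ideals. Then every proper ideal of R is an n-absorbing {0}-prime ideal if and only if R is isomorphic as a ring to a product F₁ × F₂ × ⋯ × F_{n+1} of n+1 fields. -/

import Mathlib

/-- A proper ideal `P` of a commutative ring `R` is an `n`-absorbing `I`-prime ideal
if whenever a product of `n+1` elements lies in `P \ I*P`, the product of some `n`
of them (all but one) lies in `P`. -/
def IsNAbsorbingIPrime {R : Type*} [CommRing R] (n : ℕ) (I P : Ideal R) : Prop :=
  P ≠ ⊤ ∧ ∀ x : Fin (n + 1) → R, (∏ i, x i) ∈ P → (∏ i, x i) ∉ I * P →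
    ∃ i : Fin (n + 1), (∏ j ∈ Finset.univ.erase i, x j) ∈ P

universe u

/-!
In `∏ Fᵢ` an element lies in the ideal generated by `b` as soon as it vanishes wherever `b` does.
With at most `n + 1` coordinates and `∏ xᵢ ≠ 0`, some factor `x_k` vanishes only where another
factor does, so dropping it keeps the product in every ideal containing `∏ xᵢ`.

Conversely, let `M₀, …, Mₙ` be distinct maximal ideals and `J = ⋂ Mᵢ`. If `cᵢ ∈ Mⱼ ↔ i = j`, then
`∏ cᵢ ∈ J` while no product of `n` of the `cᵢ` lies in `J`, so the absorbing property of `J`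
forces `∏ cᵢ = 0`. Replacing `c_k` by `c_k + x` with `x ∈ J` keeps the family separating, whence
`x * ∏_{j ≠ k} cⱼ = 0`. By prime avoidance the `cⱼ` with `Mⱼ ≠ N` can moreover be taken outside a
given maximal ideal `N`, so `x` dies in every localization at a maximal ideal and `J = 0`; the
Chinese remainder theorem then gives `R ≃ ∏ R ⧸ Mᵢ`.
-/

theorem Ideal.exists_mem_forall_notMem_of_not_le {R : Type*} [CommRing R] {I : Ideal R}
    {S : Set (Ideal R)} (hS : S.Finite) (hprime : ∀ P ∈ S, P.IsPrime)
    (hle : ∀ P ∈ S, ¬I ≤ P) : ∃ a ∈ I, ∀ P ∈ S, a ∉ P := by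
  have hnot := (Ideal.subset_union_prime_finite hS (f := id) ⊥ ⊥
    fun P hP _ _ => hprime P hP).not.mpr (by simpa using hle)
  obtain ⟨a, haI, ha⟩ := Set.not_subset.mp hnot
  exact ⟨a, haI, fun P hP haP => ha (Set.mem_biUnion hP haP)⟩

theorem Ideal.exists_separating_family_avoiding {R : Type*} [CommRing R] {ι : Type*} [Finite ι]
    {M : ι → Ideal R} (hM : ∀ i, (M i).IsMaximal) (hinj : Function.Injective M)
    (N : Ideal R) [hN : N.IsPrime] :
    ∃ c : ι → R, (∀ i j, c i ∈ M j ↔ i = j) ∧ ∀ i, M i ≠ N → c i ∉ N := by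
  have havoid : ∀ i, ∃ a ∈ M i, ∀ P ∈ {P ∈ insert N (Set.range M) | ¬M i ≤ P}, a ∉ P :=
    fun i => Ideal.exists_mem_forall_notMem_of_not_le
      (((Set.finite_range M).insert N).subset (Set.sep_subset _ _))
      (by rintro P ⟨rfl | ⟨j, rfl⟩, -⟩ <;> infer_instance) fun P hP => hP.2
  choose c hcM hc using havoid
  refine ⟨c, fun i j => ⟨fun hij => ?_, fun hij => hij ▸ hcM i⟩, fun i hi hiN => ?_⟩
  · by_contra hne
    exact hc i (M j)
      ⟨Or.inr ⟨j, rfl⟩, fun hle => hne (hinj ((hM i).eq_of_le (hM j).ne_top hle))⟩ hij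
  · exact hc i N ⟨Or.inl rfl, fun hle => hi ((hM i).eq_of_le hN.ne_top hle)⟩ hiN

section Absorbing

variable {R : Type*} [CommRing R] {n : ℕ} {M : Fin (n + 1) → Ideal R}

theorem prod_eq_zero_of_isNAbsorbingIPrime_bot_iInf (hM : ∀ i, (M i).IsPrime)
    (h : IsNAbsorbingIPrime n ⊥ (⨅ i, M i)) {c : Fin (n + 1) → R}
    (hc : ∀ i j, c i ∈ M j ↔ i = j) : ∏ i, c i = 0 := by
  by_contra hne
  have hmem : ∏ i, c i ∈ ⨅ i, M i :=
    (Submodule.mem_iInf _).mpr fun i => Ideal.prod_mem _ (Finset.mem_univ i) ((hc i i).mpr rfl)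
  obtain ⟨i, hi⟩ := h.2 c hmem (by simpa using hne)
  obtain ⟨j, hj, hji⟩ := (hM i).prod_mem_iff.mp ((Submodule.mem_iInf _).mp hi i)
  exact Finset.ne_of_mem_erase hj ((hc j i).mp hji)

theorem mul_prod_erase_eq_zero_of_isNAbsorbingIPrime_bot_iInf (hM : ∀ i, (M i).IsPrime)
    (h : IsNAbsorbingIPrime n ⊥ (⨅ i, M i)) {c : Fin (n + 1) → R}
    (hc : ∀ i j, c i ∈ M j ↔ i = j) {x : R} (hx : x ∈ ⨅ i, M i) (k : Fin (n + 1)) :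
    x * ∏ j ∈ Finset.univ.erase k, c j = 0 := by
  have hc' : ∀ i j, Function.update c k (c k + x) i ∈ M j ↔ i = j := by
    intro i j
    rw [← hc i j]
    rcases eq_or_ne i k with rfl | hik
    · simp [Submodule.add_mem_iff_left _ ((Submodule.mem_iInf _).mp hx j)]
    · simp [hik]
  have h₁ := prod_eq_zero_of_isNAbsorbingIPrime_bot_iInf hM h hc
  have h₂ := prod_eq_zero_of_isNAbsorbingIPrime_bot_iInf hM h hc'
  rw [← Finset.mul_prod_erase _ _ (Finset.mem_univ k)] at h₁ h₂
  rw [Function.update_self, Finset.prod_congr rfl fun j hj =>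
    Function.update_of_ne (Finset.ne_of_mem_erase hj) _ c] at h₂
  linear_combination h₂ - h₁

theorem iInf_eq_bot_of_isNAbsorbingIPrime_bot (hM : ∀ i, (M i).IsMaximal)
    (hinj : Function.Injective M) (h : IsNAbsorbingIPrime n ⊥ (⨅ i, M i)) :
    ⨅ i, M i = ⊥ := by
  refine eq_bot_iff.mpr fun x hx => eq_zero_of_localization x fun N hN => ?_
  rw [IsLocalization.map_eq_zero_iff N.primeCompl]
  obtain ⟨c, hc, hcN⟩ := Ideal.exists_separating_family_avoiding hM hinj N
  obtain ⟨k, hk⟩ : ∃ k, ∀ j ≠ k, M j ≠ N := by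
    by_cases hNM : ∃ k, M k = N
    · obtain ⟨k, rfl⟩ := hNM
      exact ⟨k, fun j hj => hinj.ne hj⟩
    · exact ⟨0, fun j _ hj => hNM ⟨j, hj⟩⟩
  have hprod : ∏ j ∈ Finset.univ.erase k, c j ∉ N := by
    rw [hN.isPrime.prod_mem_iff]
    rintro ⟨j, hj, hjN⟩
    exact hcN j (hk j (Finset.ne_of_mem_erase hj)) hjN
  refine ⟨⟨_, hprod⟩, ?_⟩
  rw [mul_comm]
  exact mul_prod_erase_eq_zero_of_isNAbsorbingIPrime_bot_iInf (fun i => (hM i).isPrime) h hc hx k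

end Absorbing

theorem nonempty_ringEquiv_pi_quotient_of_iInf_eq_bot {R : Type*} [CommRing R] {ι : Type*}
    [Finite ι] {M : ι → Ideal R} (hM : ∀ i, (M i).IsMaximal) (hinj : Function.Injective M)
    (hbot : ⨅ i, M i = ⊥) : Nonempty (R ≃+* ∀ i, R ⧸ M i) :=
  ⟨(RingEquiv.quotientBot R).symm.trans ((Ideal.quotEquivOfEq hbot.symm).trans
    (Ideal.quotientInfRingEquivPiQuotient M fun i j hij =>
      Ideal.isCoprime_iff_sup_eq.mpr ((hM i).coprime_of_ne (hM j) (hinj.ne hij))))⟩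

theorem Pi.div_mul_cancel_of_imp {ι : Type*} {F : ι → Type*} [∀ i, Field (F i)]
    {a b : ∀ i, F i} (h : ∀ i, b i = 0 → a i = 0) : a / b * b = a :=
  funext fun i => _root_.div_mul_cancel_of_imp (h i)

theorem Set.exists_subset_biUnion_compl_singleton_of_card_le {ι κ : Type*}
    [Fintype ι] [Fintype κ] (hcard : Fintype.card ι ≤ Fintype.card κ) (Z : κ → Set ι)
    (hZ : ⋃ k, Z k ≠ Set.univ) :
    ∃ k, Z k ⊆ ⋃ l ∈ ({k}ᶜ : Set κ), Z l := by
  by_contra! h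
  choose g hgZ hg using fun k => Set.not_subset.mp (h k)
  have hinj : Function.Injective g := by
    intro k k' hkk'
    by_contra hne
    exact hg k' (Set.mem_biUnion (Set.mem_compl_singleton_iff.mpr hne) (hkk' ▸ hgZ k))
  have hsurj : Function.Surjective g := ((Fintype.bijective_iff_injective_and_card g).mpr
    ⟨hinj, le_antisymm (Fintype.card_le_of_injective g hinj) hcard⟩).surjective
  refine hZ (Set.eq_univ_of_forall fun i => ?_)
  obtain ⟨k, rfl⟩ := hsurj i
  exact Set.mem_iUnion_of_mem k (hgZ k)

theorem isNAbsorbingIPrime_bot_of_ringEquiv_pi {R : Type*} [CommRing R] {n : ℕ} {ι : Type*}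
    [Fintype ι] {F : ι → Type*} [∀ i, Field (F i)] (hcard : Fintype.card ι ≤ n + 1)
    (e : R ≃+* ∀ i, F i) {P : Ideal R} (hP : P ≠ ⊤) : IsNAbsorbingIPrime n ⊥ P := by
  refine ⟨hP, fun x hxP hx0 => ?_⟩
  rw [Ideal.bot_mul, Ideal.mem_bot] at hx0
  have he_prod : ∀ (s : Finset (Fin (n + 1))) j, e (∏ l ∈ s, x l) j = ∏ l ∈ s, e (x l) j :=
    fun s j => by rw [map_prod, Finset.prod_apply]
  obtain ⟨k, hk⟩ := Set.exists_subset_biUnion_compl_singleton_of_card_le (by simpa using hcard)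
    (fun l => {j | e (x l) j = 0}) fun hcover => hx0 <| e.injective <| funext fun j => by
      obtain ⟨l, hl⟩ := Set.mem_iUnion.mp (hcover ▸ Set.mem_univ j)
      rw [map_zero, Pi.zero_apply, he_prod]
      exact Finset.prod_eq_zero (Finset.mem_univ l) hl
  refine ⟨k, ?_⟩
  have hzero : ∀ j, e (∏ l, x l) j = 0 → e (∏ l ∈ Finset.univ.erase k, x l) j = 0 := by
    simp only [he_prod, Finset.prod_eq_zero_iff, Finset.mem_univ, true_and]
    rintro j ⟨l, hl⟩
    rcases eq_or_ne l k with rfl | hlk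
    · obtain ⟨l', hl'k, hl'⟩ := Set.mem_iUnion₂.mp (hk hl)
      exact ⟨l', Finset.mem_erase.mpr ⟨hl'k, Finset.mem_univ l'⟩, hl'⟩
    · exact ⟨l, Finset.mem_erase.mpr ⟨hlk, Finset.mem_univ l⟩, hl⟩
  have hfactor : ∏ l ∈ Finset.univ.erase k, x l =
      e.symm (e (∏ l ∈ Finset.univ.erase k, x l) / e (∏ l, x l)) * ∏ l, x l :=
    e.injective (by rw [map_mul, e.apply_symm_apply, Pi.div_mul_cancel_of_imp hzero])
  rw [hfactor]
  exact P.mul_mem_left _ hxP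

theorem stmt_18_general (n : ℕ) {R : Type u} [CommRing R]
    (hmax : ∃ M : Fin (n + 1) → Ideal R, Function.Injective M ∧ ∀ i, (M i).IsMaximal) :
    (∀ P : Ideal R, P ≠ ⊤ → IsNAbsorbingIPrime n (⊥ : Ideal R) P) ↔
      ∃ (F : Fin (n + 1) → Type u) (_ : ∀ i, Field (F i)),
        Nonempty (R ≃+* ∀ i, F i) := by
  constructor
  · intro habs
    obtain ⟨M, hinj, hM⟩ := hmax
    have hne_top : ⨅ i, M i ≠ ⊤ := ne_top_of_le_ne_top (hM 0).ne_top (iInf_le M 0)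
    have hbot := iInf_eq_bot_of_isNAbsorbingIPrime_bot hM hinj (habs _ hne_top)
    exact ⟨fun i => R ⧸ M i, fun i => Ideal.Quotient.field (M i),
      nonempty_ringEquiv_pi_quotient_of_iInf_eq_bot hM hinj hbot⟩
  · rintro ⟨F, hF, ⟨e⟩⟩ P hP
    exact isNAbsorbingIPrime_bot_of_ringEquiv_pi (Fintype.card_fin _).le e hP

theorem stmt_18 (n : ℕ) (hn : 1 ≤ n) {R : Type u} [CommRing R]
    (hmax : ∃ M : Fin (n + 1) → Ideal R, Function.Injective M ∧ ∀ i, (M i).IsMaximal) :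
    (∀ P : Ideal R, P ≠ ⊤ → IsNAbsorbingIPrime n (⊥ : Ideal R) P) ↔
      ∃ (F : Fin (n + 1) → Type u) (_ : ∀ i, Field (F i)),
        Nonempty (R ≃+* ∀ i, F i) :=
  stmt_18_general n hmax
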